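/- arXiv:1402.3712 — 6 statements merged into one kernel-verified Lean document; each statement's English description precedes it below -/
import Mathlib

section
/- Let X be a compact metric space. For all M < ∞ and ε, δ > 0, the integral ∫ exp[(min(ξ_δ, M) − ε)·τ] dμ̄ is finite, where ξ_δ(x) = sup{c ≥ 0 : ∫ e^{cτ} 1_{B_δ(x)} dμ̄ < ∞}. -/
/-! Near a point `y`, every ball `B_δ(x)` with `x ∈ B_{δ/2}(y)` contains `B_{δ/2}(y)`, so
`ξ_δ(x) ≤ ξ_{δ/2}(y)` there; as `min (ξ_{δ/2}(y)) M - ε` lies strictly below `ξ_{δ/2}(y)` (or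
vanishes), the integrand is integrable on `B_{δ/2}(y)`. Compactness glues finitely many such balls. -/

open MeasureTheory ENNReal Filter Set Topology
open scoped NNReal

noncomputable def eexp (a : ℝ≥0∞) : ℝ≥0∞ :=
  if a = ⊤ then ⊤ else ENNReal.ofReal (Real.exp a.toReal)

noncomputable def xiSet {X : Type*} [MeasurableSpace X] (μ : Measure X) (τ : X → ℝ≥0∞)
    (A : Set X) : ℝ≥0∞ :=
  sSup {c : ℝ≥0∞ | ∃ r : ℝ≥0, c = (r : ℝ≥0∞) ∧ ∫⁻ x in A, eexp ((r : ℝ≥0∞) * τ x) ∂μ < ⊤}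

noncomputable def xiDelta {X : Type*} [MeasurableSpace X] [PseudoMetricSpace X]
    (μ : Measure X) (τ : X → ℝ≥0∞) (δ : ℝ) (x : X) : ℝ≥0∞ :=
  xiSet μ τ (Metric.ball x δ)

noncomputable def xi {X : Type*} [MeasurableSpace X] [PseudoMetricSpace X]
    (μ : Measure X) (τ : X → ℝ≥0∞) (x : X) : ℝ≥0∞ :=
  ⨆ (δ : ℝ) (_ : 0 < δ), xiDelta μ τ δ x

theorem IsCompact.setLIntegral_lt_top_of_nhdsWithin {X : Type*} [TopologicalSpace X]
    [MeasurableSpace X] {μ : Measure X} {f : X → ℝ≥0∞} {s : Set X} (hs : IsCompact s)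
    (hf : ∀ x ∈ s, ∃ t ∈ 𝓝[s] x, ∫⁻ y in t, f y ∂μ < ⊤) : ∫⁻ y in s, f y ∂μ < ⊤ :=
  hs.induction_on (by simp) (fun _ _ hst ht => (lintegral_mono_set hst).trans_lt ht)
    (fun s t hs ht => (lintegral_union_le f s t).trans_lt (add_lt_top.2 ⟨hs, ht⟩)) hf

theorem eexp_mono : Monotone eexp := by
  intro a b h
  unfold eexp
  by_cases hb : b = ⊤
  · simp [hb]
  · have ha : a ≠ ⊤ := ne_top_of_le_ne_top hb h
    simp only [ha, hb, if_false]
    exact ENNReal.ofReal_le_ofReal (Real.exp_le_exp.mpr (ENNReal.toReal_mono hb h))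

@[simp]
theorem eexp_zero : eexp 0 = 1 := by simp [eexp]

theorem measurable_eexp : Measurable eexp :=
  Measurable.ite (measurableSet_singleton ⊤) measurable_const
    (ENNReal.measurable_ofReal.comp (Real.measurable_exp.comp ENNReal.measurable_toReal))

section xiSet

variable {X : Type*} [MeasurableSpace X] {μ : Measure X} {τ : X → ℝ≥0∞}

theorem xiSet_anti {A B : Set X} (h : A ⊆ B) : xiSet μ τ B ≤ xiSet μ τ A := by
  apply sSup_le_sSup
  rintro c ⟨r, rfl, hfin⟩
  exact ⟨r, rfl, (lintegral_mono_set h).trans_lt hfin⟩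

theorem setLIntegral_eexp_mul_lt_top_of_lt_xiSet {A : Set X} {a : ℝ≥0∞}
    (ha : a < xiSet μ τ A) : ∫⁻ x in A, eexp (a * τ x) ∂μ < ⊤ := by
  obtain ⟨c, ⟨r, rfl, hfin⟩, hac⟩ := lt_sSup_iff.mp ha
  exact (lintegral_mono fun x => eexp_mono (mul_le_mul_left hac.le _)).trans_lt hfin

theorem setLIntegral_eexp_sub_mul_lt_top {A : Set X} (hA : μ A ≠ ⊤) {c ε : ℝ≥0∞}
    (hc : c ≤ xiSet μ τ A) (hc_top : c ≠ ⊤) (hε : ε ≠ 0) :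
    ∫⁻ x in A, eexp ((c - ε) * τ x) ∂μ < ⊤ := by
  rcases le_or_gt c ε with hcε | hεc
  · simpa [tsub_eq_zero_of_le hcε] using hA.lt_top
  · exact setLIntegral_eexp_mul_lt_top_of_lt_xiSet
      ((ENNReal.sub_lt_self hc_top (pos_of_gt hεc).ne' hε).trans_le hc)

end xiSet

theorem xiDelta_le_xiDelta {X : Type*} [MeasurableSpace X] [PseudoMetricSpace X]
    (μ : Measure X) (τ : X → ℝ≥0∞) {x y : X} {r δ : ℝ} (h : r + dist y x ≤ δ) :
    xiDelta μ τ δ x ≤ xiDelta μ τ r y :=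
  xiSet_anti (Metric.ball_subset_ball' h)

theorem stmt4_general {X : Type*} [MetricSpace X] [CompactSpace X] [MeasurableSpace X]
    (μ : Measure X) [IsProbabilityMeasure μ] (τ : X → ℝ≥0∞) (hτ : Measurable τ)
    (M : ℝ≥0) (ε : ℝ≥0) (hε : 0 < ε) (δ : ℝ) (hδ : 0 < δ) :
    ∫⁻ x, eexp ((min (xiDelta μ τ δ x) (M : ℝ≥0∞) - (ε : ℝ≥0∞)) * τ x) ∂μ < ⊤ := by
  rw [← setLIntegral_univ]
  refine isCompact_univ.setLIntegral_lt_top_of_nhdsWithin fun y _ =>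
    ⟨Metric.ball y (δ / 2), by simpa using Metric.ball_mem_nhds y (half_pos hδ), ?_⟩
  set c := min (xiDelta μ τ (δ / 2) y) (M : ℝ≥0∞)
  have hbound : ∀ x ∈ Metric.ball y (δ / 2),
      eexp ((min (xiDelta μ τ δ x) M - ε) * τ x) ≤ eexp ((c - ε) * τ x) := by
    intro x hx
    have hδx : δ / 2 + dist y x ≤ δ := by
      rw [dist_comm]; linarith [Metric.mem_ball.mp hx]
    exact eexp_mono (mul_le_mul_left (tsub_le_tsub_right
      (min_le_min_right _ (xiDelta_le_xiDelta μ τ hδx)) _) _)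
  calc _ ≤ ∫⁻ x in Metric.ball y (δ / 2), eexp ((c - ε) * τ x) ∂μ :=
        setLIntegral_mono (measurable_eexp.comp (hτ.const_mul _)) hbound
    _ < ⊤ := setLIntegral_eexp_sub_mul_lt_top (measure_ne_top _ _) (min_le_left _ _)
        (ne_top_of_le_ne_top coe_ne_top (min_le_right _ _)) (by exact_mod_cast hε.ne')

/-- Lemma `l:unifint`, first part: on a compact metric space, for every
finite `M` and `ε, δ > 0`, `∫ exp[(ξ_δ ∧ M − ε) τ] dμ̄ < ∞`. -/
theorem stmt4 {X : Type*} [MetricSpace X] [CompactSpace X] [MeasurableSpace X] [BorelSpace X]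
    (μ : Measure X) [IsProbabilityMeasure μ] (τ : X → ℝ≥0∞) (hτ : Measurable τ)
    (M : ℝ≥0) (ε : ℝ≥0) (hε : 0 < ε) (δ : ℝ) (hδ : 0 < δ) :
    ∫⁻ x, eexp ((min (xiDelta μ τ δ x) (M : ℝ≥0∞) - (ε : ℝ≥0∞)) * τ x) ∂μ < ⊤ :=
  stmt4_general μ τ hτ M ε hε δ hδ
end

section
/- If f : X → (−∞,∞] is lower semicontinuous and ∫ e^{τ f} dμ̄ < ∞, then f(x) ≤ ξ(x) for all x ∈ X, where ξ(x) = sup_{δ>0} sup{c ≥ 0 : ∫ e^{cτ} 1_{B_δ(x)} dμ̄ < ∞}. -/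
open MeasureTheory ENNReal Filter Set Topology
open scoped NNReal

/-! For `0 ≤ c < f x`, lower semicontinuity gives a ball `B_δ(x)` on which `c < f`. There
`e^{cτ} ≤ e^{τ f}`, so `∫_{B_δ(x)} e^{cτ} dμ ≤ ∫ e^{τ f} dμ < ∞`, whence `c ≤ ξ_δ(x) ≤ ξ(x)`. -/

lemma eexp_eq_exp (a : ℝ≥0∞) : eexp a = EReal.exp (a : EReal) := by
  cases a with
  | top => simp [eexp]
  | coe r =>
    rw [EReal.coe_nnreal_eq_coe_real, EReal.exp_coe]
    simp [eexp]

lemma eexp_mul_le_exp_mul {s t : ℝ≥0∞} {g : EReal} (hs : (s : EReal) ≤ g) :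
    eexp (s * t) ≤ EReal.exp (t * g) := by
  rw [eexp_eq_exp, EReal.coe_ennreal_mul, mul_comm]
  exact EReal.exp_monotone (mul_le_mul_of_nonneg_left hs (EReal.coe_ennreal_nonneg t))

lemma EReal.le_coe_ennreal_of_forall_coe_nnreal_lt {a : EReal} {b : ℝ≥0∞}
    (h : ∀ c : ℝ≥0, ((c : ℝ≥0∞) : EReal) < a → (c : ℝ≥0∞) ≤ b) : a ≤ b := by
  by_contra! hba
  obtain ⟨z, hbz, hza⟩ := EReal.lt_iff_exists_real_btwn.1 hba
  have hz : (((z.toNNReal : ℝ≥0) : ℝ≥0∞) : EReal) = z := by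
    rw [EReal.coe_nnreal_eq_coe_real, Real.coe_toNNReal z]
    exact_mod_cast (EReal.coe_ennreal_nonneg b).trans hbz.le
  have hzb := EReal.coe_ennreal_le_coe_ennreal_iff.2 (h z.toNNReal (hz ▸ hza))
  exact (hz ▸ hzb).not_gt hbz

section Xi

variable {X : Type*} [MeasurableSpace X] {μ : Measure X} {τ : X → ℝ≥0∞}

lemma le_xiSet_of_forall_le {A : Set X} (hA : MeasurableSet A) {g : X → EReal}
    (hint : ∫⁻ x, EReal.exp ((τ x : EReal) * g x) ∂μ < ⊤) {r : ℝ≥0}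
    (hr : ∀ y ∈ A, ((r : ℝ≥0∞) : EReal) ≤ g y) : (r : ℝ≥0∞) ≤ xiSet μ τ A := by
  refine le_sSup ⟨r, rfl, lt_of_le_of_lt ?_ hint⟩
  calc ∫⁻ y in A, eexp (r * τ y) ∂μ
      ≤ ∫⁻ y in A, EReal.exp ((τ y : EReal) * g y) ∂μ :=
        setLIntegral_mono' hA fun y hy => eexp_mul_le_exp_mul (hr y hy)
    _ ≤ ∫⁻ y, EReal.exp ((τ y : EReal) * g y) ∂μ := setLIntegral_le_lintegral _ _

lemma xiDelta_le_xi [PseudoMetricSpace X] {δ : ℝ} (hδ : 0 < δ) (x : X) :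
    xiDelta μ τ δ x ≤ xi μ τ x :=
  le_iSup₂ (f := fun δ (_ : 0 < δ) => xiDelta μ τ δ x) δ hδ

end Xi

theorem stmt5_general {X : Type*} [MetricSpace X] [MeasurableSpace X] [BorelSpace X]
    (μ : Measure X) (τ : X → ℝ≥0∞)
    (f : X → EReal) (hf : LowerSemicontinuous f)
    (hint : ∫⁻ x, EReal.exp ((τ x : EReal) * f x) ∂μ < ⊤) :
    ∀ x, f x ≤ (xi μ τ x : EReal) := by
  intro x
  refine EReal.le_coe_ennreal_of_forall_coe_nnreal_lt fun c hc => ?_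
  obtain ⟨δ, hδ, hball⟩ := Metric.mem_nhds_iff.1 (hf x _ hc)
  calc (c : ℝ≥0∞) ≤ xiDelta μ τ δ x :=
        le_xiSet_of_forall_le Metric.isOpen_ball.measurableSet hint fun y hy => (hball hy).le
    _ ≤ xi μ τ x := xiDelta_le_xi hδ x

/-- Lemma `l:unifint`, second part: if `f : X → (−∞,∞]` is lower
semicontinuous and `∫ e^{τ f} dμ̄ < ∞`, then `f ≤ ξ` everywhere. -/
theorem stmt5 {X : Type*} [MetricSpace X] [MeasurableSpace X] [BorelSpace X]
    (μ : Measure X) [IsProbabilityMeasure μ] (τ : X → ℝ≥0∞) (hτ : Measurable τ)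
    (f : X → EReal) (hf : LowerSemicontinuous f) (hf' : ∀ x, f x ≠ ⊥)
    (hint : ∫⁻ x, EReal.exp ((τ x : EReal) * f x) ∂μ < ⊤) :
    ∀ x, f x ≤ (xi μ τ x : EReal) :=
  stmt5_general μ τ f hf hint
end

section
/- On a compact metric space, ξ(x) = sup{ f(x) : f lower semicontinuous on X with ∫ e^{τ f} dμ̄ < ∞ }, for every x ∈ X. -/
/-! If `f` is lower semicontinuous with `∫ e^{τ f} dμ < ∞` and `r < f x`, then `f > r` on a ball
`B_δ(x)`, so `∫_{B_δ(x)} e^{r τ} dμ < ∞` and `r ≤ ξ(x)`. Conversely, if `∫_{B_δ(x)} e^{r τ} dμ < ∞`,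
the function `r · 1_{B_δ(x)}` is lower semicontinuous (the ball is open) and has a finite
exponential moment because `μ` is finite off the ball; its value at `x` is `r`. -/

open MeasureTheory ENNReal Filter Set Topology
open scoped NNReal

lemma EReal.exp_coe_ennreal (a : ℝ≥0∞) : EReal.exp (a : EReal) = eexp a := by
  rcases eq_or_ne a ⊤ with rfl | ha
  · simp [eexp]
  · rw [← EReal.coe_ennreal_toReal ha, EReal.exp_coe, eexp, if_neg ha]

lemma EReal.exp_coe_ennreal_mul_coe_nnreal (t : ℝ≥0∞) (r : ℝ≥0) :
    EReal.exp ((t : EReal) * ((r : ℝ≥0∞) : EReal)) = eexp ((r : ℝ≥0∞) * t) := by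
  rw [← EReal.coe_ennreal_mul, mul_comm, EReal.exp_coe_ennreal]

section

variable {X : Type*} [MeasurableSpace X] {μ : Measure X} {τ : X → ℝ≥0∞}

lemma lintegral_exp_mul_indicator_lt_top [IsFiniteMeasure μ] {A : Set X} (hA : MeasurableSet A)
    {r : ℝ≥0} (hr : ∫⁻ y in A, eexp ((r : ℝ≥0∞) * τ y) ∂μ < ⊤) :
    ∫⁻ y, EReal.exp ((τ y : EReal) * A.indicator (fun _ => ((r : ℝ≥0∞) : EReal)) y) ∂μ < ⊤ := by
  rw [← lintegral_add_compl _ hA]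
  refine ENNReal.add_lt_top.2 ⟨?_, ?_⟩
  · rwa [setLIntegral_congr_fun hA fun y hy => by
      rw [indicator_of_mem hy, EReal.exp_coe_ennreal_mul_coe_nnreal]]
  · rw [setLIntegral_congr_fun hA.compl fun y hy => by
      rw [indicator_of_notMem hy, mul_zero, EReal.exp_zero]]
    simp [measure_lt_top]

section

variable [TopologicalSpace X]

def lscExpValues (μ : Measure X) (τ : X → ℝ≥0∞) (x : X) : Set EReal :=
  {v : EReal | ∃ f : X → EReal, LowerSemicontinuous f ∧ (∀ y, f y ≠ ⊥) ∧
    (∫⁻ y, EReal.exp ((τ y : EReal) * f y) ∂μ < ⊤) ∧ v = f x}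

lemma zero_mem_lscExpValues [IsFiniteMeasure μ] (x : X) : (0 : EReal) ∈ lscExpValues μ τ x := by
  refine ⟨fun _ => 0, lowerSemicontinuous_const, fun _ => EReal.zero_ne_bot, ?_, rfl⟩
  simp

end

variable [PseudoMetricSpace X]

lemma coe_le_xi_of_setLIntegral_ball_lt_top {x : X} {δ : ℝ} (hδ : 0 < δ) {r : ℝ≥0}
    (hr : ∫⁻ y in Metric.ball x δ, eexp ((r : ℝ≥0∞) * τ y) ∂μ < ⊤) :
    (r : ℝ≥0∞) ≤ xi μ τ x :=
  le_iSup₂_of_le δ hδ (le_sSup ⟨r, rfl, hr⟩)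

variable [OpensMeasurableSpace X]

lemma coe_le_sSup_lscExpValues [IsFiniteMeasure μ] {x : X} {δ : ℝ} (hδ : 0 < δ) {r : ℝ≥0}
    (hr : ∫⁻ y in Metric.ball x δ, eexp ((r : ℝ≥0∞) * τ y) ∂μ < ⊤) :
    ((r : ℝ≥0∞) : EReal) ≤ sSup (lscExpValues μ τ x) := by
  refine le_sSup ⟨_, Metric.isOpen_ball.lowerSemicontinuous_indicator
    (EReal.coe_ennreal_nonneg _), fun y => ?_,
    lintegral_exp_mul_indicator_lt_top measurableSet_ball hr, ?_⟩
  · by_cases hy : y ∈ Metric.ball x δ <;> simp [hy, EReal.coe_ennreal_ne_bot]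
  · rw [indicator_of_mem (Metric.mem_ball_self hδ)]

lemma xi_le_sSup_lscExpValues [IsFiniteMeasure μ] (x : X) :
    (xi μ τ x : EReal) ≤ sSup (lscExpValues μ τ x) := by
  have hnonneg : 0 ≤ sSup (lscExpValues μ τ x) := le_sSup (zero_mem_lscExpValues x)
  rw [← EReal.coe_toENNReal hnonneg, EReal.coe_ennreal_le_coe_ennreal_iff]
  refine iSup₂_le fun δ hδ => sSup_le ?_
  rintro _ ⟨r, rfl, hr⟩
  rw [← EReal.toENNReal_coe (x := r)]
  exact EReal.toENNReal_le_toENNReal (coe_le_sSup_lscExpValues hδ hr)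

lemma LowerSemicontinuous.le_xi {f : X → EReal} (hf : LowerSemicontinuous f)
    (hint : ∫⁻ y, EReal.exp ((τ y : EReal) * f y) ∂μ < ⊤) (x : X) : f x ≤ xi μ τ x := by
  refine (EReal.coe_toENNReal_eq_max (x := f x) ▸ le_max_right 0 (f x)).trans ?_
  rw [EReal.coe_ennreal_le_coe_ennreal_iff]
  refine ENNReal.le_of_forall_nnreal_lt fun r hr => ?_
  have hrf : ((r : ℝ≥0∞) : EReal) < f x := by
    have := EReal.coe_ennreal_lt_coe_ennreal_iff.2 hr
    rw [EReal.coe_toENNReal_eq_max] at this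
    exact (lt_max_iff.1 this).resolve_left (EReal.coe_ennreal_nonneg _).not_gt
  obtain ⟨δ, hδ, hball⟩ := Metric.eventually_nhds_iff.1 (hf x _ hrf)
  refine coe_le_xi_of_setLIntegral_ball_lt_top hδ (lt_of_le_of_lt ?_ hint)
  refine (setLIntegral_mono' measurableSet_ball fun y hy => ?_).trans
    (setLIntegral_le_lintegral _ _)
  rw [← EReal.exp_coe_ennreal_mul_coe_nnreal]
  exact EReal.exp_monotone
    (mul_le_mul_of_nonneg_left (hball (Metric.mem_ball.1 hy)).le (EReal.coe_ennreal_nonneg _))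

lemma sSup_lscExpValues_le_xi (x : X) : sSup (lscExpValues μ τ x) ≤ xi μ τ x :=
  sSup_le fun _ ⟨_, hf, _, hint, hv⟩ => hv ▸ hf.le_xi hint x

end

theorem stmt6_general {X : Type*} [MetricSpace X] [MeasurableSpace X] [BorelSpace X]
    (μ : Measure X) [IsProbabilityMeasure μ] (τ : X → ℝ≥0∞) (x : X) :
    (xi μ τ x : EReal) =
      sSup {v : EReal | ∃ f : X → EReal, LowerSemicontinuous f ∧ (∀ y, f y ≠ ⊥) ∧
        (∫⁻ y, EReal.exp ((τ y : EReal) * f y) ∂μ < ⊤) ∧ v = f x} :=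
  le_antisymm (xi_le_sSup_lscExpValues x) (sSup_lscExpValues_le_xi x)

/-- formula `e:xi2`: on a compact metric space,
`ξ(x) = sup{ f(x) : f lsc on X, ∫ e^{τ f} dμ̄ < ∞ }` for every `x`. -/
theorem stmt6 {X : Type*} [MetricSpace X] [CompactSpace X] [MeasurableSpace X] [BorelSpace X]
    (μ : Measure X) [IsProbabilityMeasure μ] (τ : X → ℝ≥0∞) (hτ : Measurable τ) (x : X) :
    (xi μ τ x : EReal) =
      sSup {v : EReal | ∃ f : X → EReal, LowerSemicontinuous f ∧ (∀ y, f y ≠ ⊥) ∧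
        (∫⁻ y, EReal.exp ((τ y : EReal) * f y) ∂μ < ⊤) ∧ v = f x} :=
  stmt6_general μ τ x
end

section
/- H(ν|μ) = sup_{φ ∈ C_b(X)} [ν(φ) − log μ(e^φ)] equals ∫ h(dν/dμ) dμ if ν ≪ μ and +∞ otherwise, where h(ρ) = ρ(log ρ − 1) + 1. -/
/-!
Write `Φ(g) = ν(g) − log μ(e^g)`; since `h` is `klFun`, the right-hand side is `KL(ν ‖ μ)`.
For `ν ≪ μ`, `KL(ν ‖ μ) − Φ(φ)` is the divergence of `ν` from `μ` tilted by `φ`, hence `Φ ≤ KL`.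
Conversely, `C_b` is dense in `L¹(ν + μ)` and clipping preserves uniform bounds, so `Φ(g) ≤ sup`
for every bounded measurable `g`. Testing `g = log ρₙ`, with `ρₙ` the density `dν/dμ` clipped to
`[e⁻ⁿ, eⁿ]`, gives `ν(g) ≤ sup + e⁻ⁿ`, and Fatou's lemma yields `KL ≤ sup`. If `ν` is not
`≪ μ`, take `μ(A) = 0 < ν(A)`: then `Φ(r 1_A) = r ν(A)` is unbounded.
-/

open MeasureTheory ENNReal Filter Set Topology
open scoped NNReal

/-- The convex function `h(ρ) = ρ(log ρ − 1) + 1`, extended to `[0,∞]`. -/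
noncomputable def hEnt (ρ : ℝ≥0∞) : ℝ≥0∞ :=
  if ρ = ⊤ then ⊤ else ENNReal.ofReal (ρ.toReal * (Real.log ρ.toReal - 1) + 1)

/-- Relative entropy `H(ν|μ) = ∫ h(dν/dμ) dμ` if `ν ≪ μ`, and `+∞` otherwise. -/
noncomputable def relEnt {α : Type*} [MeasurableSpace α] (ν μ : Measure α) : ℝ≥0∞ :=
  open scoped Classical in
  if ν ≪ μ then ∫⁻ x, hEnt (ν.rnDeriv μ x) ∂μ else ⊤

/-- The absolutely continuous part of `ν` with respect to `μ`. -/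
noncomputable def absPart {α : Type*} [MeasurableSpace α] (ν μ : Measure α) : Measure α :=
  μ.withDensity (ν.rnDeriv μ)

/-- The normalized measure `ν̄(dx) = (1/τ(x)) ν(dx) / ν(1/τ)`. -/
noncomputable def tauTilt {X : Type*} [MeasurableSpace X] (τ : X → ℝ≥0∞) (ν : Measure X) :
    Measure X :=
  (∫⁻ x, (τ x)⁻¹ ∂ν)⁻¹ • ν.withDensity (fun x => (τ x)⁻¹)

/-- The large deviations rate functional
`I(ν) = ν_a(1/τ) H(ν̄_a|μ̄) + ν_s(ξ)` if `ν_a(1/τ) < ∞`, `+∞` otherwise. -/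
noncomputable def Ifun {X : Type*} [MeasurableSpace X] [PseudoMetricSpace X]
    (μ : Measure X) (τ : X → ℝ≥0∞) (ν : Measure X) : ℝ≥0∞ :=
  if ∫⁻ x, (τ x)⁻¹ ∂(absPart ν μ) = ⊤ then ⊤
  else (∫⁻ x, (τ x)⁻¹ ∂(absPart ν μ)) * relEnt (tauTilt τ (absPart ν μ)) μ
    + ∫⁻ x, xi μ τ x ∂(ν.singularPart μ)

/-- `ξ^∞`: the exponential-moment threshold at infinity. -/
noncomputable def xiInf {X : Type*} [MeasurableSpace X] [TopologicalSpace X]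
    (μ : Measure X) (τ : X → ℝ≥0∞) : ℝ≥0∞ :=
  sSup {c : ℝ≥0∞ | ∃ r : ℝ≥0, c = (r : ℝ≥0∞) ∧
    ∃ K : Set X, IsCompact K ∧ ∫⁻ x in Kᶜ, eexp ((r : ℝ≥0∞) * τ x) ∂μ < ⊤}

open BoundedContinuousFunction in
/-- The Donsker–Varadhan variational formula `sup_{φ ∈ C_b} [ν(φ) − log μ(e^φ)]`. -/
noncomputable def relEntVar {X : Type*} [TopologicalSpace X] [MeasurableSpace X]
    (ν μ : Measure X) : ℝ≥0∞ :=
  ⨆ φ : X →ᵇ ℝ, ENNReal.ofReal (∫ x, φ x ∂ν - Real.log (∫ x, Real.exp (φ x) ∂μ))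

open Real InformationTheory BoundedContinuousFunction

lemma hEnt_eq_ofReal_klFun {ρ : ℝ≥0∞} (hρ : ρ ≠ ∞) :
    hEnt ρ = ENNReal.ofReal (klFun ρ.toReal) := by
  rw [hEnt, if_neg hρ, klFun]
  ring_nf

lemma lintegral_hEnt_rnDeriv_eq_klDiv {α : Type*} [MeasurableSpace α] {ν μ : Measure α}
    [IsFiniteMeasure ν] [IsFiniteMeasure μ] (hνμ : ν ≪ μ) :
    ∫⁻ x, hEnt (ν.rnDeriv μ x) ∂μ = klDiv ν μ := by
  rw [klDiv_eq_lintegral_klFun_of_ac hνμ]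
  refine lintegral_congr_ae ?_
  filter_upwards [Measure.rnDeriv_ne_top ν μ] with x hx
  exact hEnt_eq_ofReal_klFun hx

lemma abs_exp_sub_exp_le {a b c : ℝ} (ha : a ≤ c) (hb : b ≤ c) :
    |exp a - exp b| ≤ exp c * |a - b| := by
  wlog hba : b ≤ a generalizing a b
  · rw [abs_sub_comm, abs_sub_comm a]
    exact this hb ha (le_of_not_ge hba)
  have h_exp_b : exp a * exp (b - a) = exp b := by rw [← exp_add]; ring_nf
  rw [abs_of_nonneg (sub_nonneg.2 (exp_le_exp.2 hba)), abs_of_nonneg (sub_nonneg.2 hba)]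
  nlinarith [add_one_le_exp (b - a), exp_pos a, exp_le_exp.2 ha]

lemma abs_max_min_sub_le {c s : ℝ} (hs : |s| ≤ c) (t : ℝ) :
    |max (-c) (min c t) - s| ≤ |t - s| := by
  grind [abs_le, le_abs_self, neg_abs_le]

section Truncation

noncomputable def truncLog (n : ℕ) (t : ℝ) : ℝ :=
  log (max (exp (-n)) (min (exp n) t))

lemma measurable_truncLog (n : ℕ) : Measurable (truncLog n) := by
  unfold truncLog
  fun_prop

lemma abs_truncLog_le (n : ℕ) (t : ℝ) : |truncLog n t| ≤ n := by
  have h_lo : exp (-n) ≤ max (exp (-n)) (min (exp n) t) := le_max_left _ _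
  have h_hi : max (exp (-n)) (min (exp n) t) ≤ exp n :=
    max_le (exp_le_exp.2 (by linarith [n.cast_nonneg (α := ℝ)])) (min_le_left _ _)
  rw [abs_le, truncLog]
  constructor
  · simpa using log_le_log (exp_pos _) h_lo
  · simpa using log_le_log ((exp_pos _).trans_le h_lo) h_hi

lemma exp_truncLog_le {t : ℝ} (ht : 0 ≤ t) (n : ℕ) : exp (truncLog n t) ≤ t + exp (-n) := by
  rw [truncLog, exp_log ((exp_pos _).trans_le (le_max_left _ _))]
  exact max_le (by linarith) (by linarith [min_le_right (exp n) t, exp_pos (-n)])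

lemma truncLog_eq_of_mem_Icc {n : ℕ} {t : ℝ} (h_lo : exp (-n) ≤ t) (h_hi : t ≤ exp n) :
    truncLog n t = log t := by
  rw [truncLog, min_eq_right h_hi, max_eq_right h_lo]

lemma eventually_truncLog_eq {t : ℝ} (ht : 0 < t) : ∀ᶠ n : ℕ in atTop, truncLog n t = log t := by
  obtain ⟨N, hN⟩ := exists_nat_ge |log t|
  filter_upwards [eventually_ge_atTop N] with n hn
  have h_abs := abs_le.1 (hN.trans (Nat.cast_le.2 hn))
  refine truncLog_eq_of_mem_Icc ?_ ?_
  · rw [← exp_log ht]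
    exact exp_le_exp.2 h_abs.1
  · rw [← exp_log ht]
    exact exp_le_exp.2 h_abs.2

lemma mul_truncLog_sub_add_one_nonneg {t : ℝ} (ht : 0 ≤ t) {n : ℕ} (hn : 1 ≤ n) :
    0 ≤ t * truncLog n t - t + 1 := by
  have hn' : (1 : ℝ) ≤ n := Nat.one_le_cast.2 hn
  rcases le_total t (exp (-n)) with h_lo | h_lo
  · have h_eq : truncLog n t = -n := by
      rw [truncLog, min_eq_right (h_lo.trans (exp_le_exp.2 (by linarith))), max_eq_left h_lo,
        log_exp]
    have h_inv : exp (-n) * (n + 1) ≤ 1 := by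
      rw [exp_neg, inv_mul_le_iff₀ (exp_pos _), mul_one]
      linarith [add_one_le_exp (n : ℝ)]
    rw [h_eq]
    nlinarith
  rcases le_total t (exp n) with h_hi | h_hi
  · rw [truncLog_eq_of_mem_Icc h_lo h_hi]
    linarith [klFun_nonneg ht, klFun_apply t]
  · have h_eq : truncLog n t = n := by
      rw [truncLog, min_eq_left h_hi, max_eq_right (exp_le_exp.2 (by linarith)), log_exp]
    rw [h_eq]
    nlinarith

lemma eventually_mul_truncLog_sub_add_one_eq {t : ℝ} (ht : 0 ≤ t) :
    ∀ᶠ n : ℕ in atTop, t * truncLog n t - t + 1 = klFun t := by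
  rcases ht.eq_or_lt with rfl | ht
  · simp [klFun_zero]
  · filter_upwards [eventually_truncLog_eq ht] with n hn
    rw [hn, klFun_apply]
    ring

end Truncation

section DonskerVaradhan

variable {X : Type*} [MeasurableSpace X]

lemma integrable_exp_of_abs_le {m : Measure X} [IsFiniteMeasure m] {g : X → ℝ}
    (hg : Measurable g) {c : ℝ} (hgc : ∀ x, |g x| ≤ c) :
    Integrable (fun x ↦ exp (g x)) m :=
  .of_bound (by fun_prop) (exp c) <| ae_of_all _ fun x ↦ by
    simpa using exp_le_exp.2 (abs_le.1 (hgc x)).2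

noncomputable def dvFunctional (ν μ : Measure X) (g : X → ℝ) : ℝ :=
  ∫ x, g x ∂ν - log (∫ x, exp (g x) ∂μ)

lemma dvFunctional_le_toReal_klDiv {ν μ : Measure X} [IsProbabilityMeasure ν]
    [IsProbabilityMeasure μ] (hνμ : ν ≪ μ) (h_llr : Integrable (llr ν μ) ν) {g : X → ℝ}
    (hg : Integrable g ν) (hexp : Integrable (fun x ↦ exp (g x)) μ) :
    dvFunctional ν μ g ≤ (klDiv ν μ).toReal := by
  have := isProbabilityMeasure_tilted hexp
  have hν_tilted : ν ≪ μ.tilted g := hνμ.trans (absolutelyContinuous_tilted hexp)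
  have h_nonneg : 0 ≤ ∫ x, llr ν (μ.tilted g) x ∂ν := by
    simpa using integral_llr_add_sub_measure_univ_nonneg hν_tilted
      (integrable_llr_tilted_right hνμ hg h_llr hexp)
  rw [integral_llr_tilted_right hνμ hg hexp h_llr] at h_nonneg
  rw [toReal_klDiv_of_measure_eq hνμ (by simp), dvFunctional]
  linarith

lemma tendsto_dvFunctional {ν μ : Measure X} [IsFiniteMeasure ν] [IsFiniteMeasure μ]
    [NeZero μ] {c : ℝ} {g : X → ℝ} {G : ℕ → X → ℝ} (hg : Measurable g)
    (hG : ∀ n, Measurable (G n)) (hgc : ∀ x, |g x| ≤ c) (hGc : ∀ n x, |G n x| ≤ c)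
    (hν : Tendsto (fun n ↦ ∫⁻ x, ‖G n x - g x‖ₑ ∂ν) atTop (𝓝 0))
    (hμ : Tendsto (fun n ↦ ∫⁻ x, ‖G n x - g x‖ₑ ∂μ) atTop (𝓝 0)) :
    Tendsto (fun n ↦ dvFunctional ν μ (G n)) atTop (𝓝 (dvFunctional ν μ g)) := by
  have h_int : Tendsto (fun n ↦ ∫ x, G n x ∂ν) atTop (𝓝 (∫ x, g x ∂ν)) :=
    tendsto_integral_of_L1 g hg.aestronglyMeasurable
      (.of_forall fun n ↦ .of_bound (hG n).aestronglyMeasurable c (ae_of_all _ (hGc n))) hν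
  have h_exp_le : ∀ n, ∫⁻ x, ‖exp (G n x) - exp (g x)‖ₑ ∂μ
      ≤ ENNReal.ofReal (exp c) * ∫⁻ x, ‖G n x - g x‖ₑ ∂μ := fun n ↦ by
    rw [← lintegral_const_mul' _ _ ENNReal.ofReal_ne_top]
    refine lintegral_mono fun x ↦ ?_
    simp only [Real.enorm_eq_ofReal_abs]
    rw [← ENNReal.ofReal_mul (exp_nonneg c)]
    exact ENNReal.ofReal_le_ofReal <|
      abs_exp_sub_exp_le (abs_le.1 (hGc n x)).2 (abs_le.1 (hgc x)).2
  have h_exp : Tendsto (fun n ↦ ∫ x, exp (G n x) ∂μ) atTop (𝓝 (∫ x, exp (g x) ∂μ)) := by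
    refine tendsto_integral_of_L1 _ (by fun_prop)
      (.of_forall fun n ↦ integrable_exp_of_abs_le (hG n) (hGc n)) ?_
    refine tendsto_of_tendsto_of_tendsto_of_le_of_le tendsto_const_nhds ?_
      (fun n ↦ zero_le) h_exp_le
    simpa using ENNReal.Tendsto.const_mul hμ (Or.inr ENNReal.ofReal_ne_top)
  have h_pos := integral_exp_pos (μ := μ) (integrable_exp_of_abs_le hg hgc)
  exact h_int.sub ((continuousAt_log h_pos.ne').tendsto.comp h_exp)

variable [TopologicalSpace X]

lemma relEntVar_le_klDiv [OpensMeasurableSpace X] {ν μ : Measure X} [IsProbabilityMeasure ν]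
    [IsProbabilityMeasure μ] (hνμ : ν ≪ μ) : relEntVar ν μ ≤ klDiv ν μ := by
  by_cases h_llr : Integrable (llr ν μ) ν
  · rw [← ENNReal.ofReal_toReal (klDiv_ne_top hνμ h_llr)]
    refine iSup_le fun φ ↦ ENNReal.ofReal_le_ofReal ?_
    exact dvFunctional_le_toReal_klDiv hνμ h_llr (φ.integrable ν)
      (integrable_exp_of_abs_le φ.continuous.measurable fun x ↦ φ.norm_coe_le_norm x)
  · simp [klDiv_of_not_integrable h_llr]

variable [TopologicalSpace.PseudoMetrizableSpace X] [BorelSpace X]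

lemma exists_seq_boundedContinuous_tendsto_lintegral (m : Measure X) [IsFiniteMeasure m]
    {g : X → ℝ} (hg : Measurable g) {c : ℝ} (hgc : ∀ x, |g x| ≤ c) :
    ∃ φ : ℕ → X →ᵇ ℝ, (∀ n x, |φ n x| ≤ c) ∧
      Tendsto (fun n ↦ ∫⁻ x, ‖φ n x - g x‖ₑ ∂m) atTop (𝓝 0) := by
  have h_int : Integrable g m := .of_bound hg.aestronglyMeasurable c (ae_of_all _ hgc)
  choose ψ hψ _ using fun n : ℕ ↦
    h_int.exists_boundedContinuous_lintegral_sub_le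
      (ENNReal.inv_ne_zero.2 (ENNReal.natCast_ne_top n))
  refine ⟨fun n ↦ const X (-c) ⊔ (const X c ⊓ ψ n), fun n x ↦ ?_, ?_⟩
  · have hc : 0 ≤ c := (abs_nonneg _).trans (hgc x)
    simp only [coe_sup, coe_inf, Pi.sup_apply, Pi.inf_apply, const_apply]
    rw [abs_le]
    exact ⟨le_max_left _ _, max_le (by linarith) (min_le_left _ _)⟩
  · refine tendsto_of_tendsto_of_tendsto_of_le_of_le tendsto_const_nhds
      ENNReal.tendsto_inv_nat_nhds_zero (fun n ↦ zero_le) fun n ↦ le_trans ?_ (hψ n)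
    refine lintegral_mono fun x ↦ ?_
    simp only [coe_sup, coe_inf, Pi.sup_apply, Pi.inf_apply, const_apply,
      Real.enorm_eq_ofReal_abs]
    rw [abs_sub_comm (g x)]
    exact ENNReal.ofReal_le_ofReal (abs_max_min_sub_le (hgc x) (ψ n x))

lemma ofReal_dvFunctional_le_relEntVar {ν μ : Measure X} [IsFiniteMeasure ν]
    [IsFiniteMeasure μ] [NeZero μ] {g : X → ℝ} (hg : Measurable g) {c : ℝ}
    (hgc : ∀ x, |g x| ≤ c) : ENNReal.ofReal (dvFunctional ν μ g) ≤ relEntVar ν μ := by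
  obtain ⟨φ, hφc, hφ⟩ := exists_seq_boundedContinuous_tendsto_lintegral (ν + μ) hg hgc
  have h_le {m : Measure X} (hm : m ≤ ν + μ) : Tendsto (fun n ↦ ∫⁻ x, ‖φ n x - g x‖ₑ ∂m)
      atTop (𝓝 0) :=
    tendsto_of_tendsto_of_tendsto_of_le_of_le tendsto_const_nhds hφ (fun n ↦ zero_le)
      fun n ↦ lintegral_mono' hm le_rfl
  have h_lim := tendsto_dvFunctional hg (fun n ↦ (φ n).continuous.measurable) hgc hφc
    (h_le (Measure.le_add_right le_rfl)) (h_le (Measure.le_add_left le_rfl))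
  exact le_of_tendsto' (ENNReal.continuous_ofReal.tendsto _ |>.comp h_lim) fun n ↦
    le_iSup (fun ψ : X →ᵇ ℝ ↦ ENNReal.ofReal (dvFunctional ν μ ψ)) (φ n)

lemma lintegral_ofReal_mul_truncLog_rnDeriv_le {ν μ : Measure X} [IsProbabilityMeasure ν]
    [IsProbabilityMeasure μ] (hνμ : ν ≪ μ) {n : ℕ} (hn : 1 ≤ n) :
    ∫⁻ x, ENNReal.ofReal ((ν.rnDeriv μ x).toReal * truncLog n (ν.rnDeriv μ x).toReal
        - (ν.rnDeriv μ x).toReal + 1) ∂μ ≤ relEntVar ν μ + ENNReal.ofReal (exp (-n)) := by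
  set ρ : X → ℝ := fun x ↦ (ν.rnDeriv μ x).toReal
  set g : X → ℝ := fun x ↦ truncLog n (ρ x)
  have hg : Measurable g := (measurable_truncLog n).comp (by fun_prop)
  have hgc : ∀ x, |g x| ≤ n := fun x ↦ abs_truncLog_le n _
  have hρ_int : Integrable ρ μ := Measure.integrable_toReal_rnDeriv
  have hρ_one : ∫ x, ρ x ∂μ = 1 := by simp [ρ, Measure.integral_toReal_rnDeriv hνμ]
  have hρg_int : Integrable (fun x ↦ ρ x * g x) μ :=
    hρ_int.mul_bdd hg.aestronglyMeasurable (ae_of_all _ hgc)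
  have hF_int : Integrable (fun x ↦ ρ x * g x - ρ x) μ := hρg_int.sub hρ_int
  have hF₁_int : Integrable (fun x ↦ ρ x * g x - ρ x + 1) μ := hF_int.add (integrable_const _)
  have h_ν : ∫ x, (ρ x * g x - ρ x + 1) ∂μ = ∫ x, g x ∂ν := by
    rw [integral_add hF_int (integrable_const _), integral_sub hρg_int hρ_int,
      hρ_one, ← integral_rnDeriv_smul hνμ]
    simp [ρ]
  have h_log : log (∫ x, exp (g x) ∂μ) ≤ exp (-n) := by
    have h_exp := integrable_exp_of_abs_le (m := μ) hg hgc
    have h_le : ∫ x, exp (g x) ∂μ ≤ ∫ x, (ρ x + exp (-n)) ∂μ :=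
      integral_mono h_exp (hρ_int.add (integrable_const _))
        fun x ↦ exp_truncLog_le ENNReal.toReal_nonneg n
    rw [integral_add hρ_int (integrable_const _), hρ_one] at h_le
    simp only [integral_const, probReal_univ, one_smul] at h_le
    linarith [log_le_sub_one_of_pos (integral_exp_pos h_exp)]
  calc ∫⁻ x, ENNReal.ofReal (ρ x * g x - ρ x + 1) ∂μ
      = ENNReal.ofReal (dvFunctional ν μ g + log (∫ x, exp (g x) ∂μ)) := by
        rw [dvFunctional, sub_add_cancel, ← h_ν, ofReal_integral_eq_lintegral_ofReal hF₁_int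
          (ae_of_all _ fun x ↦ mul_truncLog_sub_add_one_nonneg ENNReal.toReal_nonneg hn)]
    _ ≤ ENNReal.ofReal (dvFunctional ν μ g) + ENNReal.ofReal (exp (-n)) :=
        (ENNReal.ofReal_le_ofReal (by linarith)).trans ENNReal.ofReal_add_le
    _ ≤ relEntVar ν μ + ENNReal.ofReal (exp (-n)) := by
        gcongr
        exact ofReal_dvFunctional_le_relEntVar hg hgc

lemma klDiv_le_relEntVar {ν μ : Measure X} [IsProbabilityMeasure ν] [IsProbabilityMeasure μ]
    (hνμ : ν ≪ μ) : klDiv ν μ ≤ relEntVar ν μ := by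
  set ρ : X → ℝ := fun x ↦ (ν.rnDeriv μ x).toReal
  set F : ℕ → X → ℝ≥0∞ := fun n x ↦ ENNReal.ofReal (ρ x * truncLog n (ρ x) - ρ x + 1)
  have hF : ∀ n, Measurable (F n) := fun n ↦ by
    have := measurable_truncLog n
    fun_prop
  have h_lim : Tendsto (fun n : ℕ ↦ relEntVar ν μ + ENNReal.ofReal (exp (-n))) atTop
      (𝓝 (relEntVar ν μ)) := by
    simpa using tendsto_const_nhds.add (ENNReal.tendsto_ofReal
      (tendsto_exp_neg_atTop_nhds_zero.comp tendsto_natCast_atTop_atTop))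
  calc klDiv ν μ = ∫⁻ x, ENNReal.ofReal (klFun (ρ x)) ∂μ := klDiv_eq_lintegral_klFun_of_ac hνμ
    _ = ∫⁻ x, liminf (fun n ↦ F n x) atTop ∂μ := lintegral_congr fun x ↦ by
        refine (Tendsto.liminf_eq (tendsto_const_nhds.congr' ?_)).symm
        filter_upwards [eventually_mul_truncLog_sub_add_one_eq (t := ρ x) ENNReal.toReal_nonneg]
          with n hn
        simp only [F, hn]
    _ ≤ liminf (fun n ↦ ∫⁻ x, F n x ∂μ) atTop := lintegral_liminf_le hF
    _ ≤ liminf (fun n : ℕ ↦ relEntVar ν μ + ENNReal.ofReal (exp (-n))) atTop :=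
        liminf_le_liminf (by
          filter_upwards [eventually_ge_atTop 1] with n hn
          exact lintegral_ofReal_mul_truncLog_rnDeriv_le hνμ hn)
    _ = relEntVar ν μ := h_lim.liminf_eq

lemma relEntVar_eq_top_of_not_ac {ν μ : Measure X} [IsFiniteMeasure ν] [IsProbabilityMeasure μ]
    (hνμ : ¬ ν ≪ μ) : relEntVar ν μ = ∞ := by
  obtain ⟨A, hA, hμA, hνA⟩ : ∃ A, MeasurableSet A ∧ μ A = 0 ∧ ν A ≠ 0 := by
    by_contra! h
    exact hνμ (.mk fun s hs hμs ↦ h s hs hμs)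
  have hνA_pos : 0 < ν.real A := ENNReal.toReal_pos hνA (measure_ne_top _ _)
  have h_dv (r : ℝ) : dvFunctional ν μ (A.indicator fun _ ↦ r) = r * ν.real A := by
    have h_exp : (fun x ↦ exp (A.indicator (fun _ ↦ r) x)) =ᵐ[μ] fun _ ↦ 1 := by
      filter_upwards [measure_eq_zero_iff_ae_notMem.1 hμA] with x hx
      simp [hx]
    rw [dvFunctional, integral_congr_ae h_exp, integral_indicator_const _ hA]
    simp [mul_comm]
  refine ENNReal.eq_top_of_forall_nnreal_le fun r ↦ ?_
  have hr : 0 ≤ (r : ℝ) / ν.real A := by positivity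
  calc (r : ℝ≥0∞) = ENNReal.ofReal (dvFunctional ν μ (A.indicator fun _ ↦ r / ν.real A)) := by
        rw [h_dv, div_mul_cancel₀ _ hνA_pos.ne', ENNReal.ofReal_coe_nnreal]
    _ ≤ relEntVar ν μ := by
        refine ofReal_dvFunctional_le_relEntVar (c := r / ν.real A)
          (measurable_const.indicator hA) fun x ↦ ?_
        by_cases hx : x ∈ A <;> simp [hx, abs_of_nonneg hr, hr]

end DonskerVaradhan

theorem stmt10_general {X : Type*} [MetricSpace X] [MeasurableSpace X] [BorelSpace X]
    (ν μ : Measure X) [IsProbabilityMeasure ν] [IsProbabilityMeasure μ] :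
    (ν ≪ μ → relEntVar ν μ = ∫⁻ x, hEnt (ν.rnDeriv μ x) ∂μ) ∧
      (¬ ν ≪ μ → relEntVar ν μ = ⊤) := by
  refine ⟨fun hνμ ↦ ?_, relEntVar_eq_top_of_not_ac⟩
  rw [lintegral_hEnt_rnDeriv_eq_klDiv hνμ]
  exact le_antisymm (relEntVar_le_klDiv hνμ) (klDiv_le_relEntVar hνμ)

/-- the variational (Donsker–Varadhan) form of the relative entropy
equals `∫ h(dν/dμ) dμ` when `ν ≪ μ` (with `h(ρ) = ρ(log ρ − 1) + 1`) and `+∞` otherwise. -/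
theorem stmt10 {X : Type*} [MetricSpace X] [PolishSpace X] [MeasurableSpace X] [BorelSpace X]
    (ν μ : Measure X) [IsProbabilityMeasure ν] [IsProbabilityMeasure μ] :
    (ν ≪ μ → relEntVar ν μ = ∫⁻ x, hEnt (ν.rnDeriv μ x) ∂μ) ∧
      (¬ ν ≪ μ → relEntVar ν μ = ⊤) :=
  stmt10_general ν μ
end

section
/- (Exponential martingale / free energy bound.) Let f : X → [−∞,∞] be measurable with ∫ e^{τ f} dμ̄ ≤ 1. Then sup_{t ≥ 1} (1/t) E exp[t π_t(f)] < ∞, where π_t is the empirical measure of the renewal-reward process X_t built from i.i.d. samples (x_i) with law μ̄ and sojourn times τ(x_i). -/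
open MeasureTheory ENNReal Filter Set Topology
open scoped NNReal

/-- Arrival times `S_n = Σ_{i=1}^n τ(x_i)` of the renewal process. -/
noncomputable def arrS {X Ω : Type*} (τ : X → ℝ≥0∞) (xseq : ℕ → Ω → X) (n : ℕ) (ω : Ω) :
    ℝ≥0∞ :=
  ∑ i ∈ Finset.range n, τ (xseq i ω)

/-- `N_t = inf{n : S_{n+1} ≥ t}`. -/
noncomputable def arrN {X Ω : Type*} (τ : X → ℝ≥0∞) (xseq : ℕ → Ω → X) (t : ℝ) (ω : Ω) : ℕ :=
  sInf {n : ℕ | ENNReal.ofReal t ≤ arrS τ xseq (n + 1) ω}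

/-- `t·π_t(f) = Σ_{i=1}^{N_t} τ(x_i) f(x_i) + (t − S_{N_t}) f(x_{N_t+1})`, in `[−∞,∞]`. -/
noncomputable def tPi {X Ω : Type*} (τ : X → ℝ≥0∞) (xseq : ℕ → Ω → X) (f : X → EReal)
    (t : ℝ) (ω : Ω) : EReal :=
  (∑ i ∈ Finset.range (arrN τ xseq t ω), (τ (xseq i ω) : EReal) * f (xseq i ω)) +
    ((ENNReal.ofReal t - arrS τ xseq (arrN τ xseq t ω) ω : ℝ≥0∞) : EReal) *
      f (xseq (arrN τ xseq t ω) ω)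

/-! Write `g = e^{τ f}` and `φ = e^{-τ}`. Since the last sojourn is cut at time `t`,
`e^{t π_t(f)} ≤ ∏_{i < N_t} g(x_i) · (1 + g(x_{N_t}))`, and on `{N_t = n}` we have `S_n < t`,
hence `1 ≤ e · ∏_{i < n} φ(x_i)^{1/t}`. Summing over `n` and using independence,
`E e^{t π_t(f)} ≤ 2e / (1 - r_t)` with `r_t = ∫ g φ^{1/t} dμ̄`. Convexity of `s ↦ φ^s` gives
`r_t ≤ 1 - (1 - ρ)/t` with `ρ = ∫ g φ dμ̄`, and `ρ < 1` because `τ > 0` a.s.; therefore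
`(1/t) E e^{t π_t(f)} ≤ 2e / (1 - ρ)`. Integrating the same bound on `1_{S_n < t}` gives
`P(S_n < t for all n) ≤ e (∫ φ^{1/t} dμ̄)^n → 0`, so `N_t` is a.s. a genuine first passage index. -/

lemma EReal.exp_sum {ι : Type*} (s : Finset ι) (a : ι → EReal) :
    EReal.exp (∑ i ∈ s, a i) = ∏ i ∈ s, EReal.exp (a i) := by
  classical
  induction s using Finset.induction_on with
  | empty => simp
  | insert _ _ hi ih => rw [Finset.sum_insert hi, Finset.prod_insert hi, EReal.exp_add, ih]

lemma EReal.exp_neg_coe_ennreal_add (a b : ℝ≥0∞) :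
    EReal.exp (-((a + b : ℝ≥0∞) : EReal)) =
      EReal.exp (-(a : EReal)) * EReal.exp (-(b : EReal)) := by
  have hpos : ∀ c : ℝ≥0∞, EReal.exp (c : EReal) ≠ 0 := fun c =>
    (EReal.zero_lt_exp_iff.2 (EReal.bot_lt_coe_ennreal c)).ne'
  simp only [EReal.exp_neg, EReal.coe_ennreal_add, EReal.exp_add]
  exact ENNReal.mul_inv (Or.inl (hpos a)) (Or.inr (hpos b))

lemma EReal.exp_neg_coe_ennreal_sum {ι : Type*} (s : Finset ι) (c : ι → ℝ≥0∞) :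
    EReal.exp (-((∑ i ∈ s, c i : ℝ≥0∞) : EReal)) = ∏ i ∈ s, EReal.exp (-(c i : EReal)) := by
  classical
  induction s using Finset.induction_on with
  | empty => simp
  | insert _ _ hi ih =>
    rw [Finset.sum_insert hi, Finset.prod_insert hi, EReal.exp_neg_coe_ennreal_add, ih]

lemma EReal.exp_mul_le_one_add_exp_mul {a c : ℝ≥0∞} (hac : a ≤ c) (y : EReal) :
    EReal.exp (a * y) ≤ 1 + EReal.exp (c * y) := by
  rcases le_total y 0 with hy | hy
  · calc EReal.exp (a * y) ≤ 1 :=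
          EReal.exp_le_one_iff.2 (mul_nonpos_of_nonneg_of_nonpos (EReal.coe_ennreal_nonneg a) hy)
      _ ≤ 1 + EReal.exp (c * y) := le_self_add
  · calc EReal.exp (a * y) ≤ EReal.exp (c * y) := EReal.exp_monotone
          (mul_le_mul_of_nonneg_right (EReal.coe_ennreal_le_coe_ennreal_iff.2 hac) hy)
      _ ≤ 1 + EReal.exp (c * y) := le_add_self

lemma EReal.exp_neg_coe_ennreal_lt_one {c : ℝ≥0∞} (hc : c ≠ 0) : EReal.exp (-(c : EReal)) < 1 :=
  EReal.exp_lt_one_iff.2 (by simpa [pos_iff_ne_zero] using hc)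

lemma ENNReal.rpow_le_ofReal_one_sub_add_mul {s : ℝ} (hs0 : 0 ≤ s) (hs1 : s ≤ 1) (a : ℝ≥0∞) :
    a ^ s ≤ ENNReal.ofReal (1 - s) + ENNReal.ofReal s * a := by
  rcases eq_or_lt_of_le hs0 with rfl | hs
  · simp
  rcases eq_or_ne a ⊤ with rfl | ha
  · simp [ENNReal.top_rpow_of_pos hs, ENNReal.mul_top (ENNReal.ofReal_pos.2 hs).ne']
  lift a to ℝ≥0 using ha
  have := NNReal.geom_mean_le_arith_mean2_weighted (1 - s).toNNReal s.toNNReal 1 a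
    (by rw [← Real.toNNReal_add (by linarith) hs0]; simp)
  rw [NNReal.one_rpow, one_mul, Real.coe_toNNReal _ hs0, mul_one] at this
  rw [ENNReal.ofReal, ENNReal.ofReal, ← ENNReal.coe_rpow_of_nonneg _ hs0]
  exact_mod_cast this

lemma ENNReal.ofReal_mul_inv_one_sub_le {r ρ : ℝ≥0∞} {s : ℝ} (hs0 : 0 < s) (hs1 : s ≤ 1)
    (hr : r ≤ ENNReal.ofReal (1 - s) + ENNReal.ofReal s * ρ) :
    ENNReal.ofReal s * (1 - r)⁻¹ ≤ (1 - ρ)⁻¹ := by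
  have hs : ENNReal.ofReal s ≠ 0 := (ENNReal.ofReal_pos.2 hs0).ne'
  have hgap : ENNReal.ofReal s * (1 - ρ) ≤ 1 - r := by
    calc ENNReal.ofReal s * (1 - ρ) = 1 - (ENNReal.ofReal (1 - s) + ENNReal.ofReal s * ρ) := by
          have h1s : 1 - ENNReal.ofReal (1 - s) = ENNReal.ofReal s := by
            rw [← ENNReal.ofReal_one, ← ENNReal.ofReal_sub _ (by linarith)]
            ring_nf
          rw [tsub_add_eq_tsub_tsub, h1s, ENNReal.mul_sub fun _ _ => ENNReal.ofReal_ne_top, mul_one]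
      _ ≤ 1 - r := tsub_le_tsub_left hr 1
  calc ENNReal.ofReal s * (1 - r)⁻¹ ≤ ENNReal.ofReal s * (ENNReal.ofReal s * (1 - ρ))⁻¹ := by
        gcongr
    _ = (1 - ρ)⁻¹ := by
        rw [ENNReal.mul_inv (Or.inl hs) (Or.inl ENNReal.ofReal_ne_top), ← mul_assoc,
          ENNReal.mul_inv_cancel hs ENNReal.ofReal_ne_top, one_mul]

lemma one_le_exp_one_mul_exp_neg_rpow {t : ℝ} (ht : 0 < t) {c : ℝ≥0∞}
    (hc : c ≤ ENNReal.ofReal t) :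
    1 ≤ ENNReal.ofReal (Real.exp 1) * EReal.exp (-(c : EReal)) ^ (1 / t) := by
  have hexp : EReal.exp (-((ENNReal.ofReal t : ℝ≥0∞) : EReal)) =
      ENNReal.ofReal (Real.exp (-t)) := by
    rw [EReal.coe_ennreal_ofReal, max_eq_left ht.le, ← EReal.coe_neg, EReal.exp_coe]
  calc (1 : ℝ≥0∞) = ENNReal.ofReal (Real.exp 1) * ENNReal.ofReal (Real.exp (-t)) ^ (1 / t) := by
        rw [ENNReal.ofReal_rpow_of_nonneg (Real.exp_nonneg _) (by positivity), ← Real.exp_mul,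
          ← ENNReal.ofReal_mul (Real.exp_nonneg _), ← Real.exp_add]
        field_simp
        simp
    _ ≤ _ := by
        rw [← hexp]
        gcongr
        exact EReal.neg_le_neg_iff.2 (EReal.coe_ennreal_le_coe_ennreal_iff.2 hc)

lemma lintegral_mul_lt_one_of_ae_lt_one {X : Type*} [MeasurableSpace X] {μ : Measure X}
    {ψ φ : X → ℝ≥0∞} (hψ : AEMeasurable ψ μ) (hψ1 : ∫⁻ x, ψ x ∂μ ≤ 1)
    (hφ1 : ∀ᵐ x ∂μ, φ x < 1) : ∫⁻ x, ψ x * φ x ∂μ < 1 := by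
  by_cases hψ0 : ψ =ᵐ[μ] 0
  · calc ∫⁻ x, ψ x * φ x ∂μ = 0 :=
          lintegral_eq_zero_of_ae_eq_zero (hψ0.mono fun x hx => by simp [hx])
      _ < 1 := zero_lt_one
  have hle : (fun x => ψ x * φ x) ≤ᵐ[μ] ψ := by
    filter_upwards [hφ1] with x hx using mul_le_of_le_one_right' hx.le
  refine lt_of_lt_of_le (lintegral_strict_mono_of_ae_le_of_frequently_ae_lt hψ ?_ hle ?_) hψ1
  · exact ne_top_of_le_ne_top one_ne_top ((lintegral_mono_ae hle).trans hψ1)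
  · have hψtop : ∀ᵐ x ∂μ, ψ x ≠ ⊤ := ae_lt_top' hψ (ne_top_of_le_ne_top one_ne_top hψ1) |>.mono
      fun x hx => hx.ne
    refine ((Filter.not_eventually.1 hψ0).and_eventually (hφ1.and hψtop)).mono ?_
    rintro x ⟨hx0, hx1, hxt⟩
    exact (lt_of_lt_of_eq ((ENNReal.mul_lt_mul_iff_right hx0 hxt).2 hx1) (mul_one _)).ne

lemma lintegral_mul_rpow_le {X : Type*} [MeasurableSpace X] {μ : Measure X} {ψ φ : X → ℝ≥0∞}
    (hψ : Measurable ψ) {s : ℝ} (hs0 : 0 ≤ s) (hs1 : s ≤ 1) :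
    ∫⁻ x, ψ x * φ x ^ s ∂μ ≤
      ENNReal.ofReal (1 - s) * ∫⁻ x, ψ x ∂μ + ENNReal.ofReal s * ∫⁻ x, ψ x * φ x ∂μ := by
  calc ∫⁻ x, ψ x * φ x ^ s ∂μ
      ≤ ∫⁻ x, ENNReal.ofReal (1 - s) * ψ x + ENNReal.ofReal s * (ψ x * φ x) ∂μ :=
        lintegral_mono fun x => by
          calc ψ x * φ x ^ s ≤ ψ x * (ENNReal.ofReal (1 - s) + ENNReal.ofReal s * φ x) := by
                gcongr
                exact ENNReal.rpow_le_ofReal_one_sub_add_mul hs0 hs1 _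
            _ = _ := by ring
    _ = _ := by
        rw [lintegral_add_left (hψ.const_mul _), lintegral_const_mul' _ _ ENNReal.ofReal_ne_top,
          lintegral_const_mul' _ _ ENNReal.ofReal_ne_top]

section Renewal

variable {X Ω : Type*}

lemma arrS_succ (τ : X → ℝ≥0∞) (xseq : ℕ → Ω → X) (n : ℕ) (ω : Ω) :
    arrS τ xseq (n + 1) ω = arrS τ xseq n ω + τ (xseq n ω) :=
  Finset.sum_range_succ _ _

lemma arrS_arrN_lt (τ : X → ℝ≥0∞) (xseq : ℕ → Ω → X) {t : ℝ} (ht : 0 < t) (ω : Ω) :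
    arrS τ xseq (arrN τ xseq t ω) ω < ENNReal.ofReal t := by
  rcases hN : arrN τ xseq t ω with _ | k
  · simpa [arrS] using ht
  · have hk : k ∉ {n : ℕ | ENNReal.ofReal t ≤ arrS τ xseq (n + 1) ω} :=
      Nat.notMem_of_lt_sInf (by rw [← arrN, hN]; omega)
    simpa using hk

lemma le_arrS_arrN_succ {τ : X → ℝ≥0∞} {xseq : ℕ → Ω → X} {t : ℝ} {ω : Ω}
    (hω : ∃ n, ENNReal.ofReal t ≤ arrS τ xseq (n + 1) ω) :
    ENNReal.ofReal t ≤ arrS τ xseq (arrN τ xseq t ω + 1) ω :=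
  Nat.sInf_mem hω

lemma one_le_exp_one_mul_prod_rpow {τ : X → ℝ≥0∞} {xseq : ℕ → Ω → X} {t : ℝ} (ht : 0 < t)
    {n : ℕ} {ω : Ω} (hn : arrS τ xseq n ω ≤ ENNReal.ofReal t) :
    1 ≤ ENNReal.ofReal (Real.exp 1) *
      ∏ i ∈ Finset.range n, EReal.exp (-(τ (xseq i ω) : EReal)) ^ (1 / t) := by
  rw [ENNReal.prod_rpow_of_nonneg (by positivity), ← EReal.exp_neg_coe_ennreal_sum]
  exact one_le_exp_one_mul_exp_neg_rpow ht hn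

noncomputable def renewalSeries (xseq : ℕ → Ω → X) (h χ : X → ℝ≥0∞) (ω : Ω) : ℝ≥0∞ :=
  ∑' n, (∏ i ∈ Finset.range n, h (xseq i ω)) * χ (xseq n ω)

lemma exp_tPi_le_renewalSeries (τ : X → ℝ≥0∞) (xseq : ℕ → Ω → X) (f : X → EReal) {t : ℝ}
    (ht : 0 < t) {ω : Ω} (hω : ∃ n, ENNReal.ofReal t ≤ arrS τ xseq (n + 1) ω) :
    EReal.exp (tPi τ xseq f t ω) ≤ ENNReal.ofReal (Real.exp 1) *
      renewalSeries xseq (fun x => EReal.exp (τ x * f x) * EReal.exp (-(τ x : EReal)) ^ (1 / t))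
        (fun x => 1 + EReal.exp (τ x * f x)) ω := by
  set n := arrN τ xseq t ω
  have hlast : EReal.exp ((ENNReal.ofReal t - arrS τ xseq n ω : ℝ≥0∞) * f (xseq n ω)) ≤
      1 + EReal.exp (τ (xseq n ω) * f (xseq n ω)) :=
    EReal.exp_mul_le_one_add_exp_mul (tsub_le_iff_left.2
      ((le_arrS_arrN_succ hω).trans_eq (arrS_succ τ xseq n ω))) _
  have hone := one_le_exp_one_mul_prod_rpow ht (arrS_arrN_lt τ xseq ht ω).le
  calc EReal.exp (tPi τ xseq f t ω)
      = (∏ i ∈ Finset.range n, EReal.exp (τ (xseq i ω) * f (xseq i ω))) *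
          EReal.exp ((ENNReal.ofReal t - arrS τ xseq n ω : ℝ≥0∞) * f (xseq n ω)) := by
        rw [tPi, EReal.exp_add, EReal.exp_sum]
    _ ≤ (∏ i ∈ Finset.range n, EReal.exp (τ (xseq i ω) * f (xseq i ω))) *
          (ENNReal.ofReal (Real.exp 1) *
            ∏ i ∈ Finset.range n, EReal.exp (-(τ (xseq i ω) : EReal)) ^ (1 / t)) *
          (1 + EReal.exp (τ (xseq n ω) * f (xseq n ω))) :=
        mul_le_mul' (le_mul_of_one_le_right' hone) hlast
    _ = ENNReal.ofReal (Real.exp 1) * ((∏ i ∈ Finset.range n, EReal.exp (τ (xseq i ω) *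
          f (xseq i ω)) * EReal.exp (-(τ (xseq i ω) : EReal)) ^ (1 / t)) *
          (1 + EReal.exp (τ (xseq n ω) * f (xseq n ω)))) := by
        rw [Finset.prod_mul_distrib]
        ring
    _ ≤ _ := by
        gcongr
        exact ENNReal.le_tsum n

end Renewal

section Independent

variable {X Ω : Type*} [MeasurableSpace X] [MeasurableSpace Ω] {μ : Measure X} {P : Measure Ω}
  {τ : X → ℝ≥0∞} {xseq : ℕ → Ω → X}

lemma lintegral_prod_range_mul (hxseq : ∀ i, Measurable (xseq i))
    (hindep : ProbabilityTheory.iIndepFun xseq P) (hlaw : ∀ i, P.map (xseq i) = μ)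
    {h χ : X → ℝ≥0∞} (hh : Measurable h) (hχ : Measurable χ) (n : ℕ) :
    ∫⁻ ω, (∏ i ∈ Finset.range n, h (xseq i ω)) * χ (xseq n ω) ∂P =
      (∫⁻ x, h x ∂μ) ^ n * ∫⁻ x, χ x ∂μ := by
  set Φ : ℕ → X → ℝ≥0∞ := fun i => if i < n then h else χ
  have hΦ : ∀ i, Measurable (Φ i) := fun i => by
    simp only [Φ]
    split_ifs <;> assumption
  have hlawΦ : ∀ i, ∫⁻ ω, Φ i (xseq i ω) ∂P = ∫⁻ x, Φ i x ∂μ := fun i => by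
    rw [← hlaw i, lintegral_map (hΦ i) (hxseq i)]
  calc ∫⁻ ω, (∏ i ∈ Finset.range n, h (xseq i ω)) * χ (xseq n ω) ∂P
      = ∫⁻ ω, ∏ i ∈ Finset.range (n + 1), (Φ i ∘ xseq i) ω ∂P := by
        refine lintegral_congr fun ω => ?_
        rw [Finset.prod_range_succ]
        simp only [Function.comp_apply, Φ, lt_irrefl, if_false]
        congr 1
        exact Finset.prod_congr rfl fun i hi => by simp [Finset.mem_range.1 hi]
    _ = ∏ i ∈ Finset.range (n + 1), ∫⁻ x, Φ i x ∂μ := by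
        rw [ProbabilityTheory.lintegral_prod_eq_prod_lintegral_of_indepFun _ _
          (hindep.comp Φ hΦ) fun i => (hΦ i).comp (hxseq i)]
        exact Finset.prod_congr rfl fun i _ => hlawΦ i
    _ = (∫⁻ x, h x ∂μ) ^ n * ∫⁻ x, χ x ∂μ := by
        rw [Finset.prod_range_succ]
        simp only [Φ, lt_irrefl, if_false]
        congr 1
        rw [Finset.prod_eq_pow_card (b := ∫⁻ x, h x ∂μ) fun i hi => by
          simp [Finset.mem_range.1 hi], Finset.card_range]

lemma lintegral_renewalSeries (hxseq : ∀ i, Measurable (xseq i))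
    (hindep : ProbabilityTheory.iIndepFun xseq P) (hlaw : ∀ i, P.map (xseq i) = μ)
    {h χ : X → ℝ≥0∞} (hh : Measurable h) (hχ : Measurable χ) :
    ∫⁻ ω, renewalSeries xseq h χ ω ∂P = (1 - ∫⁻ x, h x ∂μ)⁻¹ * ∫⁻ x, χ x ∂μ := by
  unfold renewalSeries
  rw [lintegral_tsum fun n => Measurable.aemeasurable (by fun_prop)]
  simp_rw [lintegral_prod_range_mul hxseq hindep hlaw hh hχ]
  rw [ENNReal.tsum_mul_right, ENNReal.tsum_geometric]

lemma ae_exists_le_arrS [IsProbabilityMeasure μ] (hτ : Measurable τ) (hτ0 : ∀ᵐ x ∂μ, τ x ≠ 0)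
    (hxseq : ∀ i, Measurable (xseq i)) (hindep : ProbabilityTheory.iIndepFun xseq P)
    (hlaw : ∀ i, P.map (xseq i) = μ) {t : ℝ} (ht : 0 < t) :
    ∀ᵐ ω ∂P, ∃ n, ENNReal.ofReal t ≤ arrS τ xseq (n + 1) ω := by
  set φ : X → ℝ≥0∞ := fun x => EReal.exp (-(τ x : EReal)) ^ (1 / t)
  have hφ : Measurable φ := by fun_prop
  have hr : ∫⁻ x, φ x ∂μ < 1 := by
    simpa using lintegral_mul_lt_one_of_ae_lt_one (ψ := 1) (μ := μ) aemeasurable_const (by simp)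
      (hτ0.mono fun x hx => ENNReal.rpow_lt_one (EReal.exp_neg_coe_ennreal_lt_one hx)
        (by positivity))
  have hbound : ∀ n : ℕ, P {ω | ∀ k, arrS τ xseq (k + 1) ω < ENNReal.ofReal t} ≤
      ENNReal.ofReal (Real.exp 1) * (∫⁻ x, φ x ∂μ) ^ n := fun n => by
    calc P {ω | ∀ k, arrS τ xseq (k + 1) ω < ENNReal.ofReal t}
        ≤ P {ω | 1 ≤ ENNReal.ofReal (Real.exp 1) * ∏ i ∈ Finset.range n, φ (xseq i ω)} := by
          refine measure_mono fun ω hω => one_le_exp_one_mul_prod_rpow ht ?_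
          rcases n with _ | k
          · simp [arrS]
          · exact (hω k).le
      _ ≤ ∫⁻ ω, ENNReal.ofReal (Real.exp 1) * ∏ i ∈ Finset.range n, φ (xseq i ω) ∂P := by
          simpa using mul_meas_ge_le_lintegral₀ (μ := P) (Measurable.aemeasurable (by fun_prop)) 1
      _ = ENNReal.ofReal (Real.exp 1) * (∫⁻ x, φ x ∂μ) ^ n := by
          rw [lintegral_const_mul' _ _ ENNReal.ofReal_ne_top]
          congr 1
          simpa using lintegral_prod_range_mul hxseq hindep hlaw hφ measurable_const (χ := 1) n
  have hlim : Tendsto (fun n : ℕ => ENNReal.ofReal (Real.exp 1) * (∫⁻ x, φ x ∂μ) ^ n) atTop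
      (𝓝 0) := by
    simpa using ENNReal.Tendsto.const_mul (ENNReal.tendsto_pow_atTop_nhds_zero_of_lt_one hr)
      (Or.inr ENNReal.ofReal_ne_top)
  have hnull : P {ω | ∀ k, arrS τ xseq (k + 1) ω < ENNReal.ofReal t} = 0 :=
    le_antisymm (ge_of_tendsto' hlim hbound) bot_le
  filter_upwards [measure_eq_zero_iff_ae_notMem.1 hnull] with ω hω
  simpa using hω

lemma ofReal_one_div_mul_lintegral_exp_tPi_le [IsProbabilityMeasure μ] (hτ : Measurable τ)
    (hτ0 : ∀ᵐ x ∂μ, τ x ≠ 0) (hxseq : ∀ i, Measurable (xseq i))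
    (hindep : ProbabilityTheory.iIndepFun xseq P) (hlaw : ∀ i, P.map (xseq i) = μ)
    {f : X → EReal} (hf : Measurable f) (hint : ∫⁻ x, EReal.exp (τ x * f x) ∂μ ≤ 1)
    {t : ℝ} (ht : 1 ≤ t) :
    ENNReal.ofReal (1 / t) * ∫⁻ ω, EReal.exp (tPi τ xseq f t ω) ∂P ≤
      ENNReal.ofReal (Real.exp 1) *
        (1 - ∫⁻ x, EReal.exp (τ x * f x) * EReal.exp (-(τ x : EReal)) ∂μ)⁻¹ * 2 := by
  set g : X → ℝ≥0∞ := fun x => EReal.exp (τ x * f x)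
  set φ : X → ℝ≥0∞ := fun x => EReal.exp (-(τ x : EReal))
  have hg : Measurable g := by fun_prop
  have ht0 : 0 < t := by linarith
  have hs1 : 1 / t ≤ 1 := by rw [div_le_one ht0]; exact ht
  have hr : ∫⁻ x, g x * φ x ^ (1 / t) ∂μ ≤
      ENNReal.ofReal (1 - 1 / t) + ENNReal.ofReal (1 / t) * ∫⁻ x, g x * φ x ∂μ := by
    refine (lintegral_mul_rpow_le hg (by positivity) hs1).trans ?_
    gcongr
    exact mul_le_of_le_one_right' hint
  have hg2 : ∫⁻ x, (1 + g x) ∂μ ≤ 2 := by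
    rw [lintegral_add_left measurable_const, lintegral_const, measure_univ, mul_one,
      ← one_add_one_eq_two]
    gcongr
  calc ENNReal.ofReal (1 / t) * ∫⁻ ω, EReal.exp (tPi τ xseq f t ω) ∂P
      ≤ ENNReal.ofReal (1 / t) * ∫⁻ ω, ENNReal.ofReal (Real.exp 1) *
          renewalSeries xseq (fun x => g x * φ x ^ (1 / t)) (fun x => 1 + g x) ω ∂P := by
        gcongr ENNReal.ofReal (1 / t) * ?_
        exact lintegral_mono_ae ((ae_exists_le_arrS hτ hτ0 hxseq hindep hlaw ht0).mono
          fun ω hω => exp_tPi_le_renewalSeries τ xseq f ht0 hω)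
    _ = ENNReal.ofReal (Real.exp 1) * (ENNReal.ofReal (1 / t) *
          (1 - ∫⁻ x, g x * φ x ^ (1 / t) ∂μ)⁻¹) * ∫⁻ x, (1 + g x) ∂μ := by
        rw [lintegral_const_mul' _ _ ENNReal.ofReal_ne_top,
          lintegral_renewalSeries hxseq hindep hlaw (by fun_prop) (by fun_prop)]
        ring
    _ ≤ ENNReal.ofReal (Real.exp 1) * (1 - ∫⁻ x, g x * φ x ∂μ)⁻¹ * 2 := by
        gcongr
        exact ENNReal.ofReal_mul_inv_one_sub_le (by positivity) hs1 hr

end Independent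

theorem stmt11_general {X : Type*} [MeasurableSpace X]
    (μbar : Measure X) [IsProbabilityMeasure μbar] (τ : X → ℝ≥0∞) (hτ : Measurable τ)
    (h0 : μbar {x | τ x = 0} = 0)
    {Ω : Type*} [MeasurableSpace Ω] (P : Measure Ω)
    (xseq : ℕ → Ω → X) (hxmeas : ∀ i, Measurable (xseq i))
    (hindep : ProbabilityTheory.iIndepFun xseq P)
    (hlaw : ∀ i, P.map (xseq i) = μbar)
    (f : X → EReal) (hfm : Measurable f)
    (hint : ∫⁻ x, EReal.exp ((τ x : EReal) * f x) ∂μbar ≤ 1) :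
    (⨆ (t : ℝ) (_ : 1 ≤ t),
        ENNReal.ofReal (1 / t) * ∫⁻ ω, EReal.exp (tPi τ xseq f t ω) ∂P) < ⊤ := by
  have hτ0 : ∀ᵐ x ∂μbar, τ x ≠ 0 := measure_eq_zero_iff_ae_notMem.1 h0
  have hρ : ∫⁻ x, EReal.exp (τ x * f x) * EReal.exp (-(τ x : EReal)) ∂μbar < 1 :=
    lintegral_mul_lt_one_of_ae_lt_one (by fun_prop) hint
      (hτ0.mono fun x hx => EReal.exp_neg_coe_ennreal_lt_one hx)
  refine (iSup₂_le fun t (ht : 1 ≤ t) => ofReal_one_div_mul_lintegral_exp_tPi_le hτ hτ0 hxmeas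
    hindep hlaw hfm hint ht).trans_lt ?_
  exact ENNReal.mul_lt_top (ENNReal.mul_lt_top ENNReal.ofReal_lt_top
    (ENNReal.inv_lt_top.2 (tsub_pos_of_lt hρ))) (by norm_num)

/-- Lemma `l:freee`: if `∫ e^{τ f} dμ̄ ≤ 1` then
`sup_{t ≥ 1} (1/t) E exp[t π_t(f)] < ∞`, where `π_t` is the empirical measure of the
renewal process built from an i.i.d. sequence with law `μ̄` and sojourn times `τ`. -/
theorem stmt11 {X : Type*} [MetricSpace X] [PolishSpace X] [MeasurableSpace X] [BorelSpace X]
    (μbar : Measure X) [IsProbabilityMeasure μbar] (τ : X → ℝ≥0∞) (hτ : Measurable τ)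
    (h0 : μbar {x | τ x = 0} = 0) (hinf : μbar {x | τ x = ⊤} = 0)
    {Ω : Type*} [MeasurableSpace Ω] (P : Measure Ω) [IsProbabilityMeasure P]
    (xseq : ℕ → Ω → X) (hxmeas : ∀ i, Measurable (xseq i))
    (hindep : ProbabilityTheory.iIndepFun xseq P)
    (hlaw : ∀ i, P.map (xseq i) = μbar)
    (f : X → EReal) (hfm : Measurable f)
    (hint : ∫⁻ x, EReal.exp ((τ x : EReal) * f x) ∂μbar ≤ 1) :
    (⨆ (t : ℝ) (_ : 1 ≤ t),
        ENNReal.ofReal (1 / t) * ∫⁻ ω, EReal.exp (tPi τ xseq f t ω) ∂P) < ⊤ :=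
  stmt11_general μbar τ hτ h0 P xseq hxmeas hindep hlaw f hfm hint
end

section
/- (Lower-bound criterion for large deviations from entropy estimates.) Let (P_t)_{t>0} be Borel probability measures on a Polish space Z and J : Z → [0,∞]. Suppose that for each z ∈ Z there exists a family (Q_t) of Borel probability measures on Z with Q_t → δ_z narrowly and limsup_t (1/t) H(Q_t | P_t) ≤ J(z). Then for every open O ⊆ Z, liminf_t (1/t) log P_t(O) ≥ −inf_{z ∈ O} Ĵ(z), where Ĵ is the lower semicontinuous envelope of J. -/
open MeasureTheory ENNReal Filter Set Topology BoundedContinuousFunction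
open scoped NNReal

/-- The lower semicontinuous envelope `Ĵ(z) = sup_{U ∈ 𝓝 z} inf_U J`. -/
noncomputable def lscEnv {Z : Type*} [TopologicalSpace Z] (J : Z → ℝ≥0∞) (z : Z) : ℝ≥0∞ :=
  ⨆ U ∈ 𝓝 z, ⨅ y ∈ U, J y

/-!
The Young inequality `c ρ ≤ h(ρ) + e^c - 1`, integrated over `A` against `μ` with
`ρ = dν/dμ` and `c = log (1/μ(A))`, gives the entropy inequality
`ν(A) log (1/μ(A)) ≤ H(ν|μ) + 1`. Applied to `ν = Q_t`, `μ = P_t`, `A = O` it yields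
`(1/t) log P_t(O) ≥ -((1/t) H(Q_t|P_t) + 1/t) / Q_t(O)`, and `Q_t(O) → 1` because `Q_t → δ_z`
narrowly and `O` is an open neighbourhood of `z`. Hence `liminf (1/t) log P_t(O) ≥ -J(z)` for every
`z ∈ O`, and `inf_O Ĵ = inf_O J` since `O` is open.
-/

lemma mul_le_mul_log_sub_one_add_exp (c : ℝ) {r : ℝ} (hr : 0 ≤ r) :
    c * r ≤ r * (Real.log r - 1) + Real.exp c := by
  rcases hr.eq_or_lt with rfl | hr
  · simpa using (Real.exp_pos c).le
  -- `e^(c - log r) ≥ 1 + c - log r`, multiplied by `r`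
  have h := mul_le_mul_of_nonneg_left (Real.add_one_le_exp (c - Real.log r)) hr.le
  rw [Real.exp_sub, Real.exp_log hr, mul_div_cancel₀ _ hr.ne'] at h
  linarith

lemma ofReal_mul_le_hEnt_add (c : ℝ) (ρ : ℝ≥0∞) :
    ENNReal.ofReal c * ρ ≤ hEnt ρ + ENNReal.ofReal (Real.exp c - 1) := by
  rcases eq_or_ne ρ ⊤ with rfl | hρ
  · simp [hEnt]
  have hr : 0 ≤ ρ.toReal := ENNReal.toReal_nonneg
  calc ENNReal.ofReal c * ρ = ENNReal.ofReal (c * ρ.toReal) := by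
        rw [ENNReal.ofReal_mul' hr, ENNReal.ofReal_toReal hρ]
    _ ≤ ENNReal.ofReal ((ρ.toReal * (Real.log ρ.toReal - 1) + 1) + (Real.exp c - 1)) :=
        ENNReal.ofReal_le_ofReal (by linarith [mul_le_mul_log_sub_one_add_exp c hr])
    _ ≤ hEnt ρ + ENNReal.ofReal (Real.exp c - 1) := by
        rw [hEnt, if_neg hρ]
        exact ENNReal.ofReal_add_le

lemma exp_neg_log_sub_one_mul_le_one {p : ℝ} (hp : 0 ≤ p) :
    (Real.exp (-Real.log p) - 1) * p ≤ 1 := by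
  rcases hp.eq_or_lt with rfl | hp
  · simp
  rw [Real.exp_neg, Real.exp_log hp, sub_mul, inv_mul_cancel₀ hp.ne']
  linarith

lemma ofReal_neg_log_mul_le_relEnt_add_one {α : Type*} [MeasurableSpace α] {ν μ : Measure α}
    [SigmaFinite ν] [IsProbabilityMeasure μ] (A : Set α) :
    ENNReal.ofReal (-Real.log (μ A).toReal) * ν A ≤ relEnt ν μ + 1 := by
  by_cases hac : ν ≪ μ
  swap
  · simp [relEnt, hac]
  set c := -Real.log (μ A).toReal
  have htail : ENNReal.ofReal (Real.exp c - 1) * μ A ≤ 1 := by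
    rw [← ENNReal.ofReal_toReal (measure_ne_top μ A), ← ENNReal.ofReal_mul' ENNReal.toReal_nonneg]
    exact ENNReal.ofReal_le_one.2 (exp_neg_log_sub_one_mul_le_one ENNReal.toReal_nonneg)
  calc ENNReal.ofReal c * ν A = ∫⁻ x in A, ENNReal.ofReal c * ν.rnDeriv μ x ∂μ := by
        rw [lintegral_const_mul _ (Measure.measurable_rnDeriv ν μ),
          Measure.setLIntegral_rnDeriv hac]
    _ ≤ ∫⁻ x in A, (hEnt (ν.rnDeriv μ x) + ENNReal.ofReal (Real.exp c - 1)) ∂μ :=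
        lintegral_mono fun x => ofReal_mul_le_hEnt_add c _
    _ = (∫⁻ x in A, hEnt (ν.rnDeriv μ x) ∂μ) + ENNReal.ofReal (Real.exp c - 1) * μ A := by
        rw [lintegral_add_right _ measurable_const, setLIntegral_const]
    _ ≤ relEnt ν μ + 1 := by
        rw [relEnt, if_pos hac]
        exact add_le_add (setLIntegral_le_lintegral _ _) htail

lemma neg_div_le_log_measure {α : Type*} [MeasurableSpace α] {ν μ : Measure α}
    [IsFiniteMeasure ν] [IsProbabilityMeasure μ] {A : Set α} (hH : relEnt ν μ ≠ ⊤) {q : ℝ}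
    (hq : 0 < q) (hqA : ENNReal.ofReal q ≤ ν A) :
    ((-((relEnt ν μ).toReal + 1) / q : ℝ) : EReal) ≤ ENNReal.log (μ A) := by
  have hac : ν ≪ μ := by
    by_contra h
    exact hH (by simp [relEnt, h])
  have hμA : μ A ≠ 0 := fun h => by
    simp [hac h] at hqA
    linarith
  rw [ENNReal.log_pos_real hμA (measure_ne_top μ A), EReal.coe_le_coe_iff, neg_div, neg_le]
  rcases lt_or_ge (Real.log (μ A).toReal) 0 with hlog | hlog
  · have hqA' : q ≤ (ν A).toReal := (ENNReal.ofReal_le_iff_le_toReal (measure_ne_top ν A)).1 hqA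
    have key := ENNReal.toReal_mono (ENNReal.add_ne_top.2 ⟨hH, ENNReal.one_ne_top⟩)
      (ofReal_neg_log_mul_le_relEnt_add_one (ν := ν) (μ := μ) A)
    rw [ENNReal.toReal_mul, ENNReal.toReal_ofReal (by linarith),
      ENNReal.toReal_add hH ENNReal.one_ne_top, ENNReal.toReal_one] at key
    rw [le_div_iff₀ hq]
    exact (mul_le_mul_of_nonneg_left hqA' (by linarith)).trans key
  · have : 0 ≤ ((relEnt ν μ).toReal + 1) / q := by positivity
    linarith

lemma tendsto_measure_of_tendsto_integral {Z ι : Type*} [TopologicalSpace Z] [NormalSpace Z]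
    [T1Space Z] [MeasurableSpace Z] [OpensMeasurableSpace Z] {l : Filter ι} {Q : ι → Measure Z}
    (hQ : ∀ i, IsProbabilityMeasure (Q i)) {z : Z}
    (hQz : ∀ g : Z →ᵇ ℝ, Tendsto (fun i => ∫ y, g y ∂(Q i)) l (𝓝 (g z)))
    {O : Set Z} (hO : IsOpen O) (hz : z ∈ O) :
    Tendsto (fun i => Q i O) l (𝓝 1) := by
  obtain ⟨g, hg0, hg1, hg01⟩ := exists_bounded_zero_one_of_closed hO.isClosed_compl
    isClosed_singleton (disjoint_singleton_right.2 fun h => h hz)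
  have hg_le : ∀ i, ∫ y, g y ∂(Q i) ≤ (Q i O).toReal := fun i => by
    rw [← measureReal_def, ← integral_indicator_one hO.measurableSet]
    refine integral_mono (g.integrable _) ((integrable_const 1).indicator hO.measurableSet) ?_
    intro y
    by_cases hy : y ∈ O
    · simpa [hy] using (hg01 y).2
    · simp [hy, hg0 (mem_compl hy)]
  refine tendsto_order.2 ⟨fun a ha => ?_, fun a ha => Eventually.of_forall fun i => ?_⟩
  · have hlim : Tendsto (fun i => ∫ y, g y ∂(Q i)) l (𝓝 1) := by
      simpa [hg1 rfl] using hQz g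
    filter_upwards [hlim.eventually_const_lt (ENNReal.toReal_lt_of_lt_ofReal (by simpa using ha))]
      with i hi
    exact (ENNReal.toReal_lt_toReal ha.ne_top (measure_ne_top _ _)).1 (hi.trans_le (hg_le i))
  · have := hQ i
    exact prob_le_one.trans_lt ha

lemma neg_div_le_one_div_mul_log_measure {α : Type*} [MeasurableSpace α] {ν μ : Measure α}
    [IsFiniteMeasure ν] [IsProbabilityMeasure μ] {A : Set α} (hH : relEnt ν μ ≠ ⊤) {t q B : ℝ}
    (ht : 0 < t) (hq : 0 < q) (hqA : ENNReal.ofReal q ≤ ν A)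
    (hHB : 1 / t * (relEnt ν μ).toReal ≤ B) :
    ((-(B + 1 / t) / q : ℝ) : EReal) ≤ ((1 / t : ℝ) : EReal) * ENNReal.log (μ A) := by
  calc ((-(B + 1 / t) / q : ℝ) : EReal)
      ≤ ((1 / t * (-((relEnt ν μ).toReal + 1) / q) : ℝ) : EReal) := by
        rw [EReal.coe_le_coe_iff, mul_div_assoc', div_le_div_iff_of_pos_right hq]
        linarith
    _ ≤ ((1 / t : ℝ) : EReal) * ENNReal.log (μ A) := by
        rw [EReal.coe_mul]
        exact mul_le_mul_of_nonneg_left (neg_div_le_log_measure hH hq hqA)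
          (EReal.coe_nonneg.2 (one_div_pos.2 ht).le)

theorem neg_le_liminf_log_measure {Z : Type*} [MeasurableSpace Z] {P Q : ℝ → Measure Z}
    (hP : ∀ t, 0 < t → IsProbabilityMeasure (P t)) (hQ : ∀ t, IsProbabilityMeasure (Q t))
    {O : Set Z} (hQO : Tendsto (fun t => Q t O) atTop (𝓝 1)) {a : ℝ≥0∞}
    (hH : limsup (fun t : ℝ => ENNReal.ofReal (1 / t) * relEnt (Q t) (P t)) atTop ≤ a) :
    -(a : EReal) ≤ liminf (fun t : ℝ => ((1 / t : ℝ) : EReal) * ENNReal.log (P t O)) atTop := by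
  rcases eq_or_ne a ⊤ with rfl | ha
  · simp
  rw [← EReal.coe_ennreal_toReal ha, ← EReal.coe_neg]
  refine EReal.ge_of_forall_gt_iff_ge.1 fun c hc => ?_
  set b := a.toReal
  have hb : 0 ≤ b := ENNReal.toReal_nonneg
  have hbc : b < -c := by
    have := EReal.coe_lt_coe_iff.1 hc
    linarith
  obtain ⟨ε, hε, hcε⟩ : ∃ ε > 0, -c = b + 4 * ε := ⟨(-c - b) / 4, by linarith, by ring⟩
  -- `q` is chosen so that the eventual lower bound `-(b + 2ε) / q` is exactly `c`
  obtain ⟨q, hq0, hq1, hcq⟩ : ∃ q, 0 < q ∧ q < 1 ∧ c = -(b + 2 * ε) / q :=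
    ⟨(b + 2 * ε) / -c, div_pos (by positivity) (by linarith),
      (div_lt_one (by linarith)).2 (by linarith), by field_simp [(by linarith : c ≠ 0)]⟩
  have hba : a < ENNReal.ofReal (b + ε) := by
    rw [← ENNReal.ofReal_toReal ha]
    exact (ENNReal.ofReal_lt_ofReal_iff (by positivity)).2 (by linarith)
  refine le_liminf_of_le (by isBoundedDefault) ?_
  filter_upwards [eventually_gt_atTop 0, eventually_ge_atTop ε⁻¹,
    eventually_lt_of_limsup_lt (hH.trans_lt hba),
    hQO.eventually_const_lt (ENNReal.ofReal_lt_one.2 hq1)] with t ht htε hHt hQt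
  have := hP t ht
  have := hQ t
  have ht' : 0 < 1 / t := one_div_pos.2 ht
  have hfin : relEnt (Q t) (P t) ≠ ⊤ := by
    intro h
    rw [h, ENNReal.mul_top (ENNReal.ofReal_pos.2 ht').ne'] at hHt
    exact not_top_lt hHt
  have hHb : 1 / t * (relEnt (Q t) (P t)).toReal ≤ b + ε := by
    have := ENNReal.toReal_mono ENNReal.ofReal_ne_top hHt.le
    rwa [ENNReal.toReal_mul, ENNReal.toReal_ofReal ht'.le, ENNReal.toReal_ofReal (by positivity)]
      at this
  have hinv : 1 / t ≤ ε := by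
    rw [one_div]
    exact inv_le_of_inv_le₀ hε htε
  refine le_trans ?_ (neg_div_le_one_div_mul_log_measure hfin ht hq0 hQt.le hHb)
  rw [EReal.coe_le_coe_iff, hcq, div_le_div_iff_of_pos_right hq0]
  linarith

lemma le_coe_ennreal_iInf {ι : Sort*} {f : ι → ℝ≥0∞} {x : EReal} (h : ∀ i, x ≤ f i) :
    x ≤ ((⨅ i, f i : ℝ≥0∞) : EReal) := by
  rcases le_total x 0 with hx | hx
  · exact hx.trans (EReal.coe_ennreal_nonneg _)
  rw [← EReal.coe_toENNReal hx] at h ⊢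
  exact EReal.coe_ennreal_le_coe_ennreal_iff.2
    (le_iInf fun i => EReal.coe_ennreal_le_coe_ennreal_iff.1 (h i))

theorem stmt15_general {Z : Type*} [MetricSpace Z] [MeasurableSpace Z] [BorelSpace Z]
    (Pfam : ℝ → Measure Z) (hP : ∀ t : ℝ, 0 < t → IsProbabilityMeasure (Pfam t))
    (J : Z → ℝ≥0∞)
    (hQ : ∀ z : Z, ∃ Q : ℝ → Measure Z,
      (∀ t, IsProbabilityMeasure (Q t)) ∧
      (∀ g : Z →ᵇ ℝ, Tendsto (fun t => ∫ y, g y ∂(Q t)) atTop (nhds (g z))) ∧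
      Filter.limsup (fun t : ℝ => ENNReal.ofReal (1 / t) * relEnt (Q t) (Pfam t)) atTop
        ≤ J z) :
    ∀ O : Set Z, IsOpen O →
      - ((⨅ z ∈ O, lscEnv J z : ℝ≥0∞) : EReal) ≤
        Filter.liminf (fun t : ℝ => ((1 / t : ℝ) : EReal) * ENNReal.log (Pfam t O)) atTop := by
  intro O hO
  have hpoint : ∀ z ∈ O, -(J z : EReal) ≤
      liminf (fun t : ℝ => ((1 / t : ℝ) : EReal) * ENNReal.log (Pfam t O)) atTop := by
    intro z hz
    obtain ⟨Q, hQprob, hQnarrow, hQent⟩ := hQ z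
    exact neg_le_liminf_log_measure hP hQprob
      (tendsto_measure_of_tendsto_integral hQprob hQnarrow hO hz) hQent
  calc -((⨅ z ∈ O, lscEnv J z : ℝ≥0∞) : EReal) ≤ -((⨅ z ∈ O, J z : ℝ≥0∞) : EReal) :=
        EReal.neg_le_neg_iff.2 <| EReal.coe_ennreal_le_coe_ennreal_iff.2 <|
          le_iInf₂ fun z hz => le_iSup₂_of_le O (hO.mem_nhds hz) le_rfl
    _ ≤ _ := EReal.neg_le.2 <| le_coe_ennreal_iInf fun z =>
        le_coe_ennreal_iInf fun hz => EReal.neg_le.1 (hpoint z hz)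

/-- Remark `r:ldgamma`: if for every `z` there are probability measures
`Q_t → δ_z` narrowly with `limsup (1/t) H(Q_t|P_t) ≤ J(z)`, then the large deviations lower
bound holds with rate the lower semicontinuous envelope of `J`. -/
theorem stmt15 {Z : Type*} [MetricSpace Z] [PolishSpace Z] [MeasurableSpace Z] [BorelSpace Z]
    (Pfam : ℝ → Measure Z) (hP : ∀ t : ℝ, 0 < t → IsProbabilityMeasure (Pfam t))
    (J : Z → ℝ≥0∞)
    (hQ : ∀ z : Z, ∃ Q : ℝ → Measure Z,
      (∀ t, IsProbabilityMeasure (Q t)) ∧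
      (∀ g : Z →ᵇ ℝ, Tendsto (fun t => ∫ y, g y ∂(Q t)) atTop (nhds (g z))) ∧
      Filter.limsup (fun t : ℝ => ENNReal.ofReal (1 / t) * relEnt (Q t) (Pfam t)) atTop
        ≤ J z) :
    ∀ O : Set Z, IsOpen O →
      - ((⨅ z ∈ O, lscEnv J z : ℝ≥0∞) : EReal) ≤
        Filter.liminf (fun t : ℝ => ((1 / t : ℝ) : EReal) * ENNReal.log (Pfam t O)) atTop :=
  stmt15_general Pfam hP J hQ
end
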